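/- arXiv:1401.2480 — 5 statements merged into one kernel-verified Lean document; each statement's English description precedes it below -/
import Mathlib

section
/- Suppose the set Ψ of fixed points of a continuous map A : ℝ^p → ℝ^p is finite, and suppose a sequence b^{(k+1)} = A(b^{(k)}) satisfies dist(b^{(k)}, Ψ) → 0 as k → ∞. Then there exists b ∈ Ψ such that b^{(k)} → b. -/
/-!
Let `ψ k` be a point of `Ψ` nearest to `b k`. Since `A` fixes `ψ k` and is uniformly continuous
near the compact set `Ψ`, `b (k + 1) = A (b k)` is still close to `ψ k`; being also close to
`ψ (k + 1)`, the distance between consecutive nearest points tends to `0`. In a finite set this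
forces `ψ` to be eventually constant, and its eventual value is the limit of `b`.
-/

open Filter Metric Topology Uniformity

variable {ι α β : Type*}

theorem IsCompact.tendsto_dist_map_of_tendsto_dist [PseudoMetricSpace α] [PseudoMetricSpace β]
    {s : Set α} (hs : IsCompact s) {f : α → β}
    (hf : ∀ x ∈ s, ContinuousAt f x) {l : Filter ι} {u v : ι → α} (hv : ∀ i, v i ∈ s)
    (h : Tendsto (fun i => dist (u i) (v i)) l (𝓝 0)) :
    Tendsto (fun i => dist (f (u i)) (f (v i))) l (𝓝 0) := by
  have hvu : Tendsto (fun i => (v i, u i)) l (𝓤 α) :=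
    tendsto_uniformity_iff_dist_tendsto_zero.2 (by simpa only [dist_comm] using h)
  have hfvu : Tendsto (fun i => (f (v i), f (u i))) l (𝓤 β) := tendsto_def.2 fun r hr =>
    (hvu.eventually_mem (hs.uniformContinuousAt_of_continuousAt f hf hr)).mono
      fun i hi => hi (hv i)
  simpa only [dist_comm] using tendsto_uniformity_iff_dist_tendsto_zero.1 hfvu

theorem Set.Finite.eventually_eq_of_tendsto_dist [MetricSpace α] {s : Set α} (hs : s.Finite)
    {l : Filter ι} {u v : ι → α} (hu : ∀ i, u i ∈ s) (hv : ∀ i, v i ∈ s)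
    (h : Tendsto (fun i => dist (u i) (v i)) l (𝓝 0)) : ∀ᶠ i in l, u i = v i := by
  have hsep : ∀ᶠ i in l, ∀ x ∈ s, ∀ y ∈ s, x ≠ y → dist (u i) (v i) < dist x y := by
    refine (eventually_all_finite hs).2 fun x _ => (eventually_all_finite hs).2 fun y _ => ?_
    by_cases hxy : x = y
    · exact Eventually.of_forall fun _ hne => absurd hxy hne
    · exact (h.eventually (gt_mem_nhds (dist_pos.2 hxy))).mono fun _ hi _ => hi
  filter_upwards [hsep] with i hi
  by_contra hne
  exact lt_irrefl _ (hi _ (hu i) _ (hv i) hne)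

theorem Set.Finite.exists_tendsto_of_tendsto_infDist [MetricSpace α] {s : Set α} (hs : s.Finite)
    (hne : s.Nonempty) {f : α → α} (hfix : ∀ x ∈ s, f x = x) (hf : ∀ x ∈ s, ContinuousAt f x)
    {b : ℕ → α} (hrec : ∀ k, b (k + 1) = f (b k))
    (hdist : Tendsto (fun k => infDist (b k) s) atTop (𝓝 0)) :
    ∃ ψ ∈ s, Tendsto b atTop (𝓝 ψ) := by
  choose ψ hψs hψ using fun k => hs.isCompact.exists_infDist_eq_dist hne (b k)
  have hbψ : Tendsto (fun k => dist (b k) (ψ k)) atTop (𝓝 0) := by simpa only [← hψ] using hdist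
  have hnext : Tendsto (fun k => dist (b (k + 1)) (ψ k)) atTop (𝓝 0) := by
    simpa only [hrec, hfix _ (hψs _)] using
      hs.isCompact.tendsto_dist_map_of_tendsto_dist hf hψs hbψ
  have hconsec : Tendsto (fun k => dist (ψ (k + 1)) (ψ k)) atTop (𝓝 0) := by
    refine squeeze_zero (fun _ => dist_nonneg) (fun k => dist_triangle_left _ _ (b (k + 1))) ?_
    simpa using ((tendsto_add_atTop_iff_nat 1).2 hbψ).add hnext
  have : Nonempty α := ⟨hne.some⟩
  obtain ⟨c, hc⟩ : ∃ c, ψ =ᶠ[atTop] fun _ => c := eventuallyConst_iff_exists_eventuallyEq.1 <|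
    eventuallyConst_atTop_nat.2 <| eventually_atTop.1 <|
      hs.eventually_eq_of_tendsto_dist (fun k => hψs (k + 1)) hψs hconsec
  refine ⟨c, hc.exists.elim fun k (hk : ψ k = c) => hk ▸ hψs k, ?_⟩
  rw [tendsto_iff_dist_tendsto_zero]
  exact hbψ.congr' (hc.mono fun k hk => by rw [hk])

theorem converge_to_fixed_point {p : ℕ}
    (A : EuclideanSpace ℝ (Fin p) → EuclideanSpace ℝ (Fin p)) (hA : Continuous A)
    (hfin : Set.Finite {x | A x = x}) (hne : {x | A x = x}.Nonempty)
    (b : ℕ → EuclideanSpace ℝ (Fin p)) (hrec : ∀ k, b (k + 1) = A (b k))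
    (hdist : Filter.Tendsto (fun k => Metric.infDist (b k) {x | A x = x})
      Filter.atTop (nhds 0)) :
    ∃ ψ : EuclideanSpace ℝ (Fin p), A ψ = ψ ∧ Filter.Tendsto b Filter.atTop (nhds ψ) :=
  hfin.exists_tendsto_of_tendsto_infDist hne (fun _ hx => hx)
    (fun _ _ => hA.continuousAt) hrec hdist
end

section
/- For the one-dimensional recursion b^{(k+1)} = |b^{(k)}| β̂ / (λ/n + |b^{(k)}|) with b^{(0)} ≠ 0 and β̂ ≠ 0, the closed form b^{(k)} = c^k λ |b^{(0)}| sign(β̂) / (λ + n |b^{(0)}| Σ_{m=0}^{k−1} c^m) holds for all k ≥ 1, where c = n|β̂|/λ. -/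
/-!
Taking absolute values, `a k = |b k|` satisfies `a (k+1) = a k * |β̂| / (λ/n + a k)`, whose
reciprocal is affine: `1 / a (k+1) = (1 / c) * (1 / a k) + 1 / |β̂|` with `c = n|β̂|/λ`. Unrolling it
gives the geometric sum in the closed form, and every iterate after the first has the sign of `β̂`.
-/

open Finset

theorem Real.sign_mul_abs (r : ℝ) : Real.sign r * |r| = r := by
  rcases lt_trichotomy r 0 with h | rfl | h
  · rw [Real.sign_of_neg h, abs_of_neg h, neg_one_mul, neg_neg]
  · rw [abs_zero, mul_zero]
  · rw [Real.sign_of_pos h, abs_of_pos h, one_mul]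

theorem eq_sign_mul_abs_of_eq_mul_div {y x β d : ℝ} (hx : 0 ≤ x) (hd : 0 < d)
    (hy : y = x * β / d) : y = Real.sign β * |y| := by
  rw [hy, abs_div, abs_mul, abs_of_nonneg hx, abs_of_pos hd, mul_div_assoc', mul_left_comm,
    Real.sign_mul_abs]

theorem eq_closed_form_of_succ_eq_mul_div_add {s t : ℝ} (hs : 0 < s) (ht : 0 ≤ t) {a : ℕ → ℝ}
    (ha0 : 0 ≤ a 0) (hrec : ∀ k, a (k + 1) = a k * t / (s + a k)) (k : ℕ) :
    a k = (t / s) ^ k * s * a 0 / (s + a 0 * ∑ m ∈ range k, (t / s) ^ m) := by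
  induction k with
  | zero => field_simp; simp
  | succ k ih =>
    set S := ∑ m ∈ range k, (t / s) ^ m
    have hS : 0 ≤ S := sum_nonneg fun m _ => pow_nonneg (div_nonneg ht hs.le) m
    have hD : 0 < s + a 0 * S := by positivity
    have hD' : 0 < s + a 0 * (S + (t / s) ^ k) := by positivity
    have hak : 0 < s + (t / s) ^ k * s * a 0 / (s + a 0 * S) := by positivity
    rw [hrec, ih, sum_range_succ, pow_succ]
    field_simp
    ring

theorem slog_one_dim_closed_form_general (lam : ℝ) (hlam : 0 < lam) (n : ℕ) (hn : 1 ≤ n)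
    (βhat : ℝ) (b : ℕ → ℝ)
    (hrec : ∀ k, b (k + 1) = |b k| * βhat / (lam / n + |b k|)) :
    ∀ k : ℕ, 1 ≤ k →
      b k = ((n : ℝ) * |βhat| / lam) ^ k * lam * |b 0| * Real.sign βhat /
        (lam + n * |b 0| * ∑ m ∈ Finset.range k, ((n : ℝ) * |βhat| / lam) ^ m) := by
  have hs : 0 < lam / n := div_pos hlam (Nat.cast_pos.mpr hn)
  have habs_rec : ∀ k, |b (k + 1)| = |b k| * |βhat| / (lam / n + |b k|) := fun k => by
    rw [hrec, abs_div, abs_of_pos (by positivity : 0 < lam / n + |b k|), abs_mul, abs_abs]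
  have hc : |βhat| / (lam / n) = n * |βhat| / lam := by rw [div_div_eq_mul_div, mul_comm]
  intro k hk
  obtain ⟨j, rfl⟩ := Nat.exists_eq_add_of_le' hk
  rw [eq_sign_mul_abs_of_eq_mul_div (abs_nonneg _) (by positivity) (hrec j),
    eq_closed_form_of_succ_eq_mul_div_add (a := fun k => |b k|) hs (abs_nonneg βhat)
      (abs_nonneg (b 0)) habs_rec, hc]
  field_simp

theorem slog_one_dim_closed_form (lam : ℝ) (hlam : 0 < lam) (n : ℕ) (hn : 1 ≤ n)
    (βhat : ℝ) (hβhat : βhat ≠ 0) (b : ℕ → ℝ) (hb0 : b 0 ≠ 0)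
    (hrec : ∀ k, b (k + 1) = |b k| * βhat / (lam / n + |b k|)) :
    ∀ k : ℕ, 1 ≤ k →
      b k = ((n : ℝ) * |βhat| / lam) ^ k * lam * |b 0| * Real.sign βhat /
        (lam + n * |b 0| * ∑ m ∈ Finset.range k, ((n : ℝ) * |βhat| / lam) ^ m) :=
  slog_one_dim_closed_form_general lam hlam n hn βhat b hrec
end

section
/- Let β* = ST(β̂, λ/n) denote the one-dimensional lasso solution. For the recursion b^{(k+1)} = |b^{(k)}| β̂ / (λ/n + |b^{(k)}|), the sign of (b^{(k)} − β*) is the same for all k ≥ 1: if |b^{(1)}| > |β*| then |b^{(k)}| > |β*| for all k ≥ 1, if |b^{(1)}| < |β*| then |b^{(k)}| < |β*| for all k, and if |b^{(1)}| = |β*| then equality persists. -/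
/-! On absolute values the recursion is `|b (k+1)| = g |b k|` with `g x = x |β̂| / (c + x)`,
`c = λ/n`. This map is strictly increasing on `[0, ∞)` and fixes `|ST(β̂, c)|`, so by induction
`|b k|` stays on the same side of that fixed point as `|b 1|`. -/

noncomputable def softThreshold (a c : ℝ) : ℝ := if c < |a| then a - c * Real.sign a else 0

open Set Function

theorem StrictMonoOn.cmp_orbit_eq {α : Type*} [LinearOrder α] {f : α → α} {S : Set α} {p : α}
    {u : ℕ → α} (hf : StrictMonoOn f S) (hp : p ∈ S) (hfp : IsFixedPt f p) (hu : ∀ k, u k ∈ S)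
    (hrec : ∀ k, u (k + 1) = f (u k)) (k : ℕ) : cmp (u k) p = cmp (u 0) p := by
  induction k with
  | zero => rfl
  | succ k ih => rw [hrec k, ← ih, ← hf.cmp_map_eq (hu k) hp, hfp.eq]

theorem abs_softThreshold_of_lt {a c : ℝ} (hc : 0 ≤ c) (h : c < |a|) :
    |softThreshold a c| = |a| - c := by
  rw [softThreshold, if_pos h]
  rcases lt_trichotomy a 0 with ha | rfl | ha
  · rw [Real.sign_of_neg ha, abs_of_neg ha] at *
    rw [abs_of_neg (by linarith)]
    ring
  · simp only [abs_zero] at h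
    linarith
  · rw [Real.sign_of_pos ha, abs_of_pos ha] at *
    rw [abs_of_pos (by linarith)]
    ring

theorem softThreshold_of_le {a c : ℝ} (h : |a| ≤ c) : softThreshold a c = 0 :=
  if_neg h.not_gt

noncomputable def slogStep (c B x : ℝ) : ℝ := x * B / (c + x)

theorem strictMonoOn_slogStep {c B : ℝ} (hc : 0 < c) (hB : 0 < B) :
    StrictMonoOn (slogStep c B) (Ici 0) := by
  intro x hx y hy hxy
  rw [mem_Ici] at hx hy
  rw [slogStep, slogStep, div_lt_div_iff₀ (by linarith) (by linarith)]
  nlinarith [mul_pos (mul_pos hc hB) (sub_pos.mpr hxy)]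

theorem isFixedPt_slogStep_abs_softThreshold {a c : ℝ} (hc : 0 ≤ c) :
    IsFixedPt (slogStep c |a|) |softThreshold a c| := by
  rcases lt_or_ge c |a| with h | h
  · rw [IsFixedPt, slogStep, abs_softThreshold_of_lt hc h, add_sub_cancel]
    field_simp [(hc.trans_lt h).ne']
  · rw [IsFixedPt, slogStep, softThreshold_of_le h, abs_zero, zero_mul, zero_div]

theorem slog_one_dim_same_side_general (lam : ℝ) (hlam : 0 < lam) (n : ℕ) (hn : 1 ≤ n)
    (βhat : ℝ) (hβhat : βhat ≠ 0) (b : ℕ → ℝ)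
    (hrec : ∀ k, b (k + 1) = |b k| * βhat / (lam / n + |b k|)) :
    (|b 1| > |softThreshold βhat (lam / n)| →
        ∀ k : ℕ, 1 ≤ k → |b k| > |softThreshold βhat (lam / n)|) ∧
    (|b 1| < |softThreshold βhat (lam / n)| →
        ∀ k : ℕ, 1 ≤ k → |b k| < |softThreshold βhat (lam / n)|) ∧
    (|b 1| = |softThreshold βhat (lam / n)| →
        ∀ k : ℕ, 1 ≤ k → |b k| = |softThreshold βhat (lam / n)|) := by
  have hc : 0 < lam / n := div_pos hlam (Nat.cast_pos.mpr hn)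
  set s := |softThreshold βhat (lam / n)|
  have hstep (k : ℕ) : |b (k + 1)| = slogStep (lam / n) |βhat| |b k| := by
    rw [hrec k, slogStep, abs_div, abs_mul, abs_abs,
      abs_of_pos (add_pos_of_pos_of_nonneg hc (abs_nonneg _))]
  have hcmp (k : ℕ) (hk : 1 ≤ k) : cmp |b k| s = cmp |b 1| s := by
    obtain ⟨j, rfl⟩ := Nat.exists_eq_add_of_le' hk
    exact (strictMonoOn_slogStep hc (abs_pos.mpr hβhat)).cmp_orbit_eq (u := fun j ↦ |b (j + 1)|)
      (mem_Ici.mpr (abs_nonneg _)) (isFixedPt_slogStep_abs_softThreshold hc.le)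
      (fun _ ↦ mem_Ici.mpr (abs_nonneg _))
      (fun j ↦ hstep (j + 1)) j
  refine ⟨fun h k hk ↦ ?_, fun h k hk ↦ ?_, fun h k hk ↦ ?_⟩
  · rwa [gt_iff_lt, ← cmp_eq_gt_iff, hcmp k hk, cmp_eq_gt_iff]
  · rwa [← cmp_eq_lt_iff, hcmp k hk, cmp_eq_lt_iff]
  · rwa [← cmp_eq_eq_iff, hcmp k hk, cmp_eq_eq_iff]

theorem slog_one_dim_same_side (lam : ℝ) (hlam : 0 < lam) (n : ℕ) (hn : 1 ≤ n)
    (βhat : ℝ) (hβhat : βhat ≠ 0) (b : ℕ → ℝ) (hb0 : b 0 ≠ 0)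
    (hrec : ∀ k, b (k + 1) = |b k| * βhat / (lam / n + |b k|)) :
    (|b 1| > |softThreshold βhat (lam / n)| →
        ∀ k : ℕ, 1 ≤ k → |b k| > |softThreshold βhat (lam / n)|) ∧
    (|b 1| < |softThreshold βhat (lam / n)| →
        ∀ k : ℕ, 1 ≤ k → |b k| < |softThreshold βhat (lam / n)|) ∧
    (|b 1| = |softThreshold βhat (lam / n)| →
        ∀ k : ℕ, 1 ≤ k → |b k| = |softThreshold βhat (lam / n)|) :=
  slog_one_dim_same_side_general lam hlam n hn βhat hβhat b hrec
end

section
/- Suppose n|β̂| = λ and b^{(0)} ≠ 0. Then the recursion b^{(k+1)} = |b^{(k)}| β̂ / (λ/n + |b^{(k)}|) satisfies |b^{(k)}| ≤ λ/(n k) for all k ≥ 1. -/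
/-!
With `c = λ / n = |β̂|`, the moduli `x k = |b k|` follow `x (k + 1) = x k * c / (c + x k)`, that is
`1 / x (k + 1) = 1 / x k + 1 / c`, so `1 / x k ≥ k / c`. Stated as `x k * k ≤ c`, the induction needs
no case split on `x k = 0`.
-/

noncomputable def harmonicStep (c x : ℝ) : ℝ :=
  x * c / (c + x)

theorem harmonicStep_mul_add_one_le {c x t : ℝ} (hc : 0 < c) (hx : 0 ≤ x) (h : x * t ≤ c) :
    harmonicStep c x * (t + 1) ≤ c := by
  have hden : 0 < c + x := by positivity
  rw [harmonicStep, div_mul_eq_mul_div, div_le_iff₀ hden]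
  nlinarith

theorem mul_le_of_forall_succ_eq_harmonicStep {c : ℝ} (hc : 0 < c) {x : ℕ → ℝ}
    (hx : ∀ k, 0 ≤ x k) (hrec : ∀ k, x (k + 1) = harmonicStep c (x k)) (k : ℕ) :
    x k * k ≤ c := by
  induction k with
  | zero => simpa using hc.le
  | succ k ih =>
    rw [hrec, Nat.cast_succ]
    exact harmonicStep_mul_add_one_le hc (hx k) ih

theorem slog_one_dim_rate_eq_general (lam : ℝ) (hlam : 0 < lam) (n : ℕ)
    (βhat : ℝ) (hcase : (n : ℝ) * |βhat| = lam) (b : ℕ → ℝ)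
    (hrec : ∀ k, b (k + 1) = |b k| * βhat / (lam / n + |b k|)) :
    ∀ k : ℕ, 1 ≤ k → |b k| ≤ lam / (n * k) := by
  have hn : (0 : ℝ) < n := by
    refine (Nat.cast_nonneg n).lt_of_ne fun h => ?_
    rw [← h, zero_mul] at hcase
    exact hlam.ne hcase
  have hc : 0 < lam / n := div_pos hlam hn
  have hβ : |βhat| = lam / n := by rw [eq_div_iff hn.ne', mul_comm, hcase]
  have hstep : ∀ k, |b (k + 1)| = harmonicStep (lam / n) |b k| := fun k => by
    rw [hrec, harmonicStep, abs_div, abs_mul, abs_abs, hβ, abs_of_pos (add_pos_of_pos_of_nonneg hc (abs_nonneg _))]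
  intro k hk
  have hk0 : (0 : ℝ) < k := by exact_mod_cast hk
  rw [← div_div, le_div_iff₀ hk0]
  exact mul_le_of_forall_succ_eq_harmonicStep hc (fun _ => abs_nonneg _) hstep k

theorem slog_one_dim_rate_eq (lam : ℝ) (hlam : 0 < lam) (n : ℕ) (hn : 1 ≤ n)
    (βhat : ℝ) (hcase : (n : ℝ) * |βhat| = lam) (b : ℕ → ℝ) (hb0 : b 0 ≠ 0)
    (hrec : ∀ k, b (k + 1) = |b k| * βhat / (lam / n + |b k|)) :
    ∀ k : ℕ, 1 ≤ k → |b k| ≤ lam / (n * k) :=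
  slog_one_dim_rate_eq_general lam hlam n βhat hcase b hrec
end

section
/- Let b ∈ (0,∞)^p and define a = A(b) = (X^T X + λ diag(1/b₁,…,1/b_p))^{-1} X^T y. If all components of a are nonzero, then the Jacobian of the inverse map b as a function of a has determinant (1/λ^p) (∏_j b_j²/a_j) det(X^T X + λ diag(1/b_j)), which is nonzero; consequently A cannot map a set of positive Lebesgue measure in (0,∞)^p (on which A has nonzero components) into a Lebesgue-null set. -/
/-!
On the positive orthant `Xᵀ X + λ diag(1/b)` is positive definite, so its determinant is nonzero and
`a = A(b)` solves the normal equations `(Xᵀ X + λ diag(1/b)) a = Xᵀ y`. Read componentwise, these say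
`(Xᵀ (y - X a))_j = λ a_j / b_j`; hence where `a` has no zero component, `b` is recovered from `a` by a
rational map that is differentiable there. Differentiable maps send null sets to null sets, so `s`, the
image of `A(s)` under this inverse, would be null if `A(s)` were.
-/

open Matrix MeasureTheory

theorem Matrix.det_smul_diagonal_mul {ι R : Type*} [Fintype ι] [DecidableEq ι] [CommRing R]
    (c : R) (d : ι → R) (M : Matrix ι ι R) :
    (c • diagonal d * M).det = c ^ Fintype.card ι * (∏ i, d i) * M.det := by
  rw [det_mul, det_smul, det_diagonal]

theorem Matrix.posDef_transpose_mul_self_add_smul_diagonal_inv {m ι : Type*} [Fintype m]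
    [Fintype ι] [DecidableEq ι] (X : Matrix m ι ℝ) {lam : ℝ} (hlam : 0 < lam) {b : ι → ℝ}
    (hb : ∀ j, 0 < b j) : (Xᵀ * X + lam • diagonal fun j => (b j)⁻¹).PosDef := by
  simpa using PosDef.posSemidef_add (posSemidef_conjTranspose_mul_self X)
    ((PosDef.diagonal fun j => inv_pos.2 (hb j)).smul hlam)

theorem Matrix.mulVec_inv_mulVec {ι K : Type*} [Fintype ι] [DecidableEq ι] [Field K]
    {M : Matrix ι ι K} (hM : M.det ≠ 0) (v : ι → K) : M *ᵥ (M⁻¹ *ᵥ v) = v := by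
  rw [mulVec_mulVec, mul_nonsing_inv _ (isUnit_iff_ne_zero.2 hM), one_mulVec]

theorem MeasureTheory.addHaar_eq_zero_of_leftInvOn {E : Type*} [NormedAddCommGroup E]
    [NormedSpace ℝ E] [FiniteDimensional ℝ E] [MeasurableSpace E] [BorelSpace E]
    (μ : Measure E) [μ.IsAddHaarMeasure] {f g : E → E} {s : Set E} (hgf : Set.LeftInvOn g f s)
    (hg : DifferentiableOn ℝ g (f '' s)) (hfs : μ (f '' s) = 0) : μ s = 0 := by
  simpa [hgf.image_image] using addHaar_image_eq_zero_of_differentiableOn_of_addHaar_eq_zero μ hg hfs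

section RidgeWeights

variable {ι : Type*} [Fintype ι]

/-- With `G = Xᵀ X` and `v = Xᵀ y` this is the paper's `b_j = λ a_j / (e_jᵀ Xᵀ (y - X a))`. -/
def ridgeWeights {K : Type*} [Field K] (G : Matrix ι ι K) (v : ι → K) (lam : K) (a : ι → K) :
    ι → K :=
  fun j => lam * a j / (v - G *ᵥ a) j

theorem differentiableAt_ridgeWeights {𝕜 : Type*} [NontriviallyNormedField 𝕜]
    {G : Matrix ι ι 𝕜} {v a : ι → 𝕜} (lam : 𝕜) (h : ∀ j, (v - G *ᵥ a) j ≠ 0) :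
    DifferentiableAt 𝕜 (ridgeWeights G v lam) a := by
  rw [differentiableAt_pi]
  intro j
  simp only [ridgeWeights, Pi.sub_apply, mulVec, dotProduct] at h ⊢
  fun_prop (disch := exact h j)

variable {K : Type*} [Field K] [DecidableEq ι] {G : Matrix ι ι K} {v a b : ι → K} {lam : K}

theorem sub_mulVec_apply_of_add_smul_diagonal_mulVec_eq
    (h : (G + lam • diagonal fun j => (b j)⁻¹) *ᵥ a = v) (j : ι) :
    (v - G *ᵥ a) j = lam * a j / b j := by
  rw [← h, add_mulVec, add_sub_cancel_left, Matrix.smul_mulVec, Pi.smul_apply, mulVec_diagonal,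
    smul_eq_mul]
  ring

theorem ridgeWeights_eq_of_add_smul_diagonal_mulVec_eq
    (h : (G + lam • diagonal fun j => (b j)⁻¹) *ᵥ a = v) (hlam : lam ≠ 0) (ha : ∀ j, a j ≠ 0)
    (hb : ∀ j, b j ≠ 0) : ridgeWeights G v lam a = b := by
  funext j
  rw [ridgeWeights, sub_mulVec_apply_of_add_smul_diagonal_mulVec_eq h]
  field_simp [hlam, ha j, hb j]

end RidgeWeights

theorem slog_jacobian_nonzero {n p : ℕ} (X : Matrix (Fin n) (Fin p) ℝ) (y : Fin n → ℝ)
    (lam : ℝ) (hlam : 0 < lam)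
    (A : (Fin p → ℝ) → (Fin p → ℝ))
    (hA : ∀ b : Fin p → ℝ,
      A b = (X.transpose * X + lam • Matrix.diagonal fun j => (b j)⁻¹)⁻¹.mulVec
        (X.transpose.mulVec y)) :
    (∀ b : Fin p → ℝ, (∀ j, 0 < b j) → (∀ j, A b j ≠ 0) →
      (lam⁻¹ • (Matrix.diagonal fun j => (b j) ^ 2 / A b j) *
          (X.transpose * X + lam • Matrix.diagonal fun j => (b j)⁻¹)).det =
        (1 / lam ^ p) * (∏ j, (b j) ^ 2 / A b j) *
          (X.transpose * X + lam • Matrix.diagonal fun j => (b j)⁻¹).det ∧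
      (lam⁻¹ • (Matrix.diagonal fun j => (b j) ^ 2 / A b j) *
          (X.transpose * X + lam • Matrix.diagonal fun j => (b j)⁻¹)).det ≠ 0) ∧
    ∀ s : Set (Fin p → ℝ),
      s ⊆ {b | (∀ j, 0 < b j) ∧ ∀ j, A b j ≠ 0} →
      0 < MeasureTheory.volume s → MeasureTheory.volume (A '' s) ≠ 0 := by
  have hdet : ∀ b : Fin p → ℝ, (∀ j, 0 < b j) →
      (Xᵀ * X + lam • diagonal fun j => (b j)⁻¹).det ≠ 0 := fun b hb =>
    (posDef_transpose_mul_self_add_smul_diagonal_inv X hlam hb).det_pos.ne'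
  have hnormal : ∀ b : Fin p → ℝ, (∀ j, 0 < b j) →
      (Xᵀ * X + lam • diagonal fun j => (b j)⁻¹) *ᵥ A b = Xᵀ *ᵥ y := fun b hb => by
    rw [hA b, mulVec_inv_mulVec (hdet b hb)]
  refine ⟨fun b hb ha => ⟨?_, ?_⟩, fun s hs hpos hnull => ?_⟩
  · rw [det_smul_diagonal_mul, Fintype.card_fin, inv_pow, one_div]
  · rw [det_smul_diagonal_mul]
    have hprod : ∏ j, b j ^ 2 / A b j ≠ 0 :=
      Finset.prod_ne_zero_iff.2 fun j _ => div_ne_zero (pow_ne_zero 2 (hb j).ne') (ha j)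
    exact mul_ne_zero (mul_ne_zero (by positivity) hprod) (hdet b hb)
  · refine hpos.ne' (addHaar_eq_zero_of_leftInvOn volume
      (g := ridgeWeights (Xᵀ * X) (Xᵀ *ᵥ y) lam) (fun b hb => ?_) ?_ hnull)
    · exact ridgeWeights_eq_of_add_smul_diagonal_mulVec_eq (hnormal b (hs hb).1) hlam.ne'
        (hs hb).2 fun j => ((hs hb).1 j).ne'
    · rintro _ ⟨b, hb, rfl⟩
      refine (differentiableAt_ridgeWeights lam fun j => ?_).differentiableWithinAt
      rw [sub_mulVec_apply_of_add_smul_diagonal_mulVec_eq (hnormal b (hs hb).1)]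
      exact div_ne_zero (mul_ne_zero hlam.ne' ((hs hb).2 j)) ((hs hb).1 j).ne'
end
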